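/- Let p < q be positive integers and let P be the symmetric pyramid with three rows of lengths 2p+1, 2q+1, 2p+1. Let A ∈ sTab^≤(P) and set q' = part(RS(A)). If content(q') = content((2p+1, 2p+1, 2q+1)), then q' = (2q+1, 2p+1, 2p+1) or q' = (2q+1, 2p+2, 2p). -/

import Mathlib

/-!
The word of `A` is the concatenation of three weakly increasing words, so its insertion
tableau can be followed row by row: row-inserting a weakly increasing word into a row never
shortens the row and bumps a subword of it. Hence `RS(A)` has at most three rows, the first of
length at least `2q + 1` and the third no longer than the second. The content of
`(2p + 1, 2p + 1, 2q + 1)` is `{p, p + 1, q + 1}`: one row gives a content of the wrong size,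
and two rows put `0` into the content, which `p > 0` excludes. With three rows the long first
row must account for `q + 1`, and the remaining contents `{p, p + 1}` together with the total
size leave only the two shapes.
-/


namespace BG

variable {α : Type*}

/-- One step of Robinson–Schensted row insertion: insert `x` into a weakly
increasing row, bumping the leftmost entry strictly greater than `x`. -/
def rowInsert [LinearOrder α] : List α → α → List α × Option α
  | [], x => ([x], none)
  | y :: ys, x =>
    if x < y then (x :: ys, some y)
    else
      let p := rowInsert ys x
      (y :: p.1, p.2)

/-- Insert a letter into a tableau (list of rows, top row first) by
Robinson–Schensted row insertion. -/
def insertT [LinearOrder α] : List (List α) → α → List (List α)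
  | [], x => [[x]]
  | r :: rs, x =>
    match rowInsert r x with
    | (r', none) => r' :: rs
    | (r', some y) => r' :: insertT rs y

/-- The insertion tableau of the Robinson–Schensted algorithm. -/
def RS [LinearOrder α] (w : List α) : List (List α) := w.foldl insertT []

/-- The partition underlying a tableau: the list of its row lengths
(top row first, so weakly decreasing). -/
def part (T : List (List α)) : List ℕ := T.map List.length

/-- The reversed negation of a row. -/
def negRow [Neg α] (l : List α) : List α := l.reverse.map (fun x => -x)

/-- Every column of a left-justified array (list of rows, top to bottom) is
strictly decreasing from top to bottom, where entries must decrease strictly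
across any gap occurring in the middle of a column. -/
def ColumnStrict [LT α] (B : List (List α)) : Prop :=
  ∀ j : ℕ, List.Chain' (fun x y => y < x) (B.filterMap (fun r => r[j]?))

/-- A left-justified array is row equivalent to column strict if its entries can
be permuted within rows so that every column is strictly decreasing. -/
def RowEquivColumnStrict [LT α] (A : List (List α)) : Prop :=
  ∃ B, List.Forall₂ List.Perm A B ∧ ColumnStrict B

/-- Elementary Knuth moves on words of integers. -/
inductive KnuthStep : List ℤ → List ℤ → Prop
  | move1 (u v : List ℤ) (x y z : ℤ) (hxy : x ≤ y) (hyz : y < z) :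
      KnuthStep (u ++ x :: z :: y :: v) (u ++ z :: x :: y :: v)
  | move2 (u v : List ℤ) (x y z : ℤ) (hxy : x < y) (hyz : y ≤ z) :
      KnuthStep (u ++ y :: x :: z :: v) (u ++ y :: z :: x :: v)

/-- Knuth equivalence of words of integers. -/
def KnuthEquiv : List ℤ → List ℤ → Prop := Relation.EqvGen KnuthStep

/-- Generators of the τ-equivalence: Knuth moves (R1), negating the last letter
when its absolute value exceeds that of the previous letter (R2), and
transposing the last two letters when they have opposite signs (R3). -/
inductive TauStep : List ℤ → List ℤ → Prop
  | knuth (u v : List ℤ) : KnuthStep u v → TauStep u v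
  | negLast (u : List ℤ) (b a : ℤ) (h : |b| < |a|) :
      TauStep (u ++ [b, a]) (u ++ [b, -a])
  | swapLast (u : List ℤ) (b a : ℤ) (h : b * a < 0) :
      TauStep (u ++ [b, a]) (u ++ [a, b])

/-- The τ-equivalence on words of integers. -/
def TauEquiv : List ℤ → List ℤ → Prop := Relation.EqvGen TauStep

/-- A larger-smaller transposition. -/
inductive LSStep : List ℤ → List ℤ → Prop
  | swap (u w : List ℤ) (a b : ℤ) (h : b < a) :
      LSStep (u ++ a :: b :: w) (u ++ b :: a :: w)

/-- Dominance order on partitions (weakly decreasing lists of naturals). -/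
def DomLE (μ ν : List ℕ) : Prop :=
  μ.sum = ν.sum ∧ ∀ k : ℕ, (μ.take k).sum ≤ (ν.take k).sum

/-- The content of a partition, given as a weakly decreasing list of naturals:
reverse to increasing order `(q₁ ≤ … ≤ q_m)`, prepend a zero part if necessary
so that the number of parts is odd, and take the multiset of
`⌊(qᵢ + i - 1)/2⌋` (1-indexed). -/
def contentP (q : List ℕ) : Multiset ℕ :=
  let q₁ := q.reverse
  let q₂ := if q₁.length % 2 = 1 then q₁ else 0 :: q₁
  ↑((List.range q₂.length).map (fun i => (q₂.getD i 0 + i) / 2))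

/-- Membership in `sTab^≤(P)` where `rows` is the list of row lengths of the
symmetric pyramid `P` (top to bottom): correct shape, skew-symmetry with
respect to the centre of the pyramid, weakly increasing rows, and all entries
in `ℤ` or all entries in `½ + ℤ`. -/
def MemSTabLe (rows : List ℕ) (A : List (List ℚ)) : Prop :=
  A.map List.length = rows ∧
  A.reverse.map negRow = A ∧
  (∀ row ∈ A, List.Chain' (· ≤ ·) row) ∧
  ((∀ x ∈ A.flatten, ∃ z : ℤ, x = (z : ℚ)) ∨
   (∀ x ∈ A.flatten, ∃ z : ℤ, x = (z : ℚ) + 1 / 2))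


section RowInsertion

open scoped List

variable [LinearOrder α]

theorem rowInsert_eq_append_or_bump (r : List α) (x : α) :
    (rowInsert r x = (r ++ [x], none) ∧ ∀ z ∈ r, z ≤ x) ∨
    ∃ ys y zs, r = ys ++ y :: zs ∧ rowInsert r x = (ys ++ x :: zs, some y) ∧ x < y ∧
      ∀ z ∈ ys, z ≤ x := by
  induction r with
  | nil => simp [rowInsert]
  | cons w ws ih =>
    by_cases hxw : x < w
    · exact Or.inr ⟨[], w, ws, rfl, by simp [rowInsert, hxw], hxw, by simp⟩
    rcases ih with ⟨h, hle⟩ | ⟨ys, y, zs, rfl, h, hxy, hys⟩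
    · exact Or.inl ⟨by simp [rowInsert, hxw, h], by simpa [not_lt.mp hxw] using hle⟩
    · exact Or.inr ⟨w :: ys, y, zs, rfl, by simp [rowInsert, hxw, h], hxy,
        by simpa [not_lt.mp hxw] using hys⟩

theorem rowInsert_fst_sorted {r : List α} (hr : r.Pairwise (· ≤ ·)) (x : α) :
    (rowInsert r x).1.Pairwise (· ≤ ·) := by
  rcases rowInsert_eq_append_or_bump r x with ⟨h, hle⟩ | ⟨ys, y, zs, rfl, h, hxy, hys⟩
  · rw [h, List.pairwise_append]
    exact ⟨hr, by simp, by simpa using hle⟩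
  · simp only [h, List.pairwise_append, List.pairwise_cons, List.mem_cons] at hr ⊢
    refine ⟨hr.1, ⟨fun z hz => hxy.le.trans (hr.2.1.1 z hz), hr.2.1.2⟩, ?_⟩
    rintro a ha c (rfl | hc)
    exacts [hys a ha, hr.2.2 a ha c (Or.inr hc)]

def rowInsertWord : List α → List α → List α × List α
  | r, [] => (r, [])
  | r, x :: u =>
    match rowInsert r x with
    | (r', none) => rowInsertWord r' u
    | (r', some y) => ((rowInsertWord r' u).1, y :: (rowInsertWord r' u).2)

theorem length_rowInsertWord_add (r u : List α) :
    (rowInsertWord r u).1.length + (rowInsertWord r u).2.length = r.length + u.length := by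
  induction u generalizing r with
  | nil => simp [rowInsertWord]
  | cons x u ih =>
    rcases rowInsert_eq_append_or_bump r x with ⟨h, -⟩ | ⟨ys, y, zs, rfl, h, -, -⟩
    · simp only [rowInsertWord, h, ih, List.length_append, List.length_cons, List.length_nil]
      omega
    · have := ih (ys ++ x :: zs)
      simp only [rowInsertWord, h, List.length_cons, List.length_append] at this ⊢
      omega

theorem length_le_length_rowInsertWord (r u : List α) :
    r.length ≤ (rowInsertWord r u).1.length := by
  induction u generalizing r with
  | nil => simp [rowInsertWord]
  | cons x u ih =>
    rcases rowInsert_eq_append_or_bump r x with ⟨h, -⟩ | ⟨ys, y, zs, rfl, h, -, -⟩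
    · have := ih (r ++ [x])
      simp only [rowInsertWord, h, List.length_append, List.length_singleton] at this ⊢
      omega
    · simpa [rowInsertWord, h] using ih (ys ++ x :: zs)

theorem exists_lt_of_mem_rowInsertWord_snd {r u : List α} {w : α}
    (hw : w ∈ (rowInsertWord r u).2) : ∃ v ∈ u, v < w := by
  induction u generalizing r with
  | nil => simp [rowInsertWord] at hw
  | cons x u ih =>
    have hih : ∀ r', w ∈ (rowInsertWord r' u).2 → ∃ v ∈ x :: u, v < w := fun _ hw' =>
      let ⟨v, hv, hvw⟩ := ih hw'
      ⟨v, List.mem_cons_of_mem x hv, hvw⟩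
    rcases rowInsert_eq_append_or_bump r x with ⟨h, -⟩ | ⟨ys, y, zs, rfl, h, hxy, -⟩ <;>
      simp only [rowInsertWord, h, List.mem_cons] at hw
    · exact hih _ hw
    · rcases hw with rfl | hw
      exacts [⟨x, List.mem_cons_self, hxy⟩, hih _ hw]

theorem rowInsertWord_fst_sorted {r : List α} (hr : r.Pairwise (· ≤ ·)) (u : List α) :
    (rowInsertWord r u).1.Pairwise (· ≤ ·) := by
  induction u generalizing r with
  | nil => exact hr
  | cons x u ih =>
    have := ih (rowInsert_fst_sorted hr x)
    rcases h : rowInsert r x with ⟨r', _ | y⟩ <;> simpa [rowInsertWord, h] using this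

theorem rowInsertWord_snd_sublist (r : List α) {u : List α} (hu : u.Pairwise (· ≤ ·)) :
    (rowInsertWord r u).2 <+ r := by
  induction u generalizing r with
  | nil => simp [rowInsertWord]
  | cons x u ih =>
    rw [List.pairwise_cons] at hu
    -- every letter bumped later exceeds a letter of `u`, hence exceeds `x`
    have hgt : ∀ r', ∀ w ∈ (rowInsertWord r' u).2, x < w := fun r' w hw =>
      let ⟨v, hv, hvw⟩ := exists_lt_of_mem_rowInsertWord_snd hw
      (hu.1 v hv).trans_lt hvw
    rcases rowInsert_eq_append_or_bump r x with ⟨h, -⟩ | ⟨ys, y, zs, rfl, h, -, hys⟩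
    · simp only [rowInsertWord, h]
      refine (ih (r ++ [x]) hu.2).of_sublist_append_left fun w hw hwx => ?_
      exact (hgt _ w hw).ne (List.mem_singleton.mp hwx).symm
    · simp only [rowInsertWord, h]
      have hzs : (rowInsertWord (ys ++ x :: zs) u).2 <+ zs := by
        refine List.Sublist.of_sublist_append_right (l₁ := ys ++ [x]) (fun w hw hmem => ?_)
          (by simpa using ih (ys ++ x :: zs) hu.2)
        rcases List.mem_append.mp hmem with hmem | hmem
        · exact (hgt _ w hw).not_ge (hys w hmem)
        · exact (hgt _ w hw).ne (List.mem_singleton.mp hmem).symm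
      exact (hzs.cons_cons y).trans (List.sublist_append_right ys _)

theorem foldl_insertT_cons (r : List α) (T : List (List α)) (u : List α) :
    u.foldl insertT (r :: T) = (rowInsertWord r u).1 :: (rowInsertWord r u).2.foldl insertT T := by
  induction u generalizing r T with
  | nil => rfl
  | cons x u ih =>
    rcases h : rowInsert r x with ⟨r', _ | y⟩ <;> simp [insertT, rowInsertWord, h, ih]

theorem RS_append (u v : List α) : RS (u ++ v) = v.foldl insertT (RS u) :=
  List.foldl_append

theorem RS_of_sorted {u : List α} (hu : u.Pairwise (· ≤ ·)) (hne : u ≠ []) : RS u = [u] := by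
  induction u using List.reverseRecOn with
  | nil => exact absurd rfl hne
  | append_singleton l x ih =>
    rcases eq_or_ne l [] with rfl | hl
    · rfl
    rw [List.pairwise_append] at hu
    have hlx : ∀ z ∈ l, z ≤ x := fun z hz => hu.2.2 z hz x List.mem_cons_self
    rcases rowInsert_eq_append_or_bump l x with ⟨h, -⟩ | ⟨ys, y, zs, rfl, -, hxy, -⟩
    · rw [RS_append, ih hu.1 hl]
      simp [insertT, h]
    · exact absurd (hlx y (by simp)) (not_le.mpr hxy)

theorem RS_append_of_sorted {A : List α} (hA : A.Pairwise (· ≤ ·)) (hA₀ : A ≠ []) (M : List α) :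
    RS (A ++ M) = (rowInsertWord A M).1 :: RS (rowInsertWord A M).2 := by
  rw [RS_append, RS_of_sorted hA hA₀, foldl_insertT_cons]
  rfl

theorem part_RS_append_of_sorted {U V : List α} (hU : U.Pairwise (· ≤ ·))
    (hV : V.Pairwise (· ≤ ·)) :
    part (RS (U ++ V)) = [] ∨ (∃ y, part (RS (U ++ V)) = [y]) ∨
    ∃ y z, part (RS (U ++ V)) = [y, z] ∧ z ≤ y := by
  rcases eq_or_ne U [] with rfl | hU₀
  · rcases eq_or_ne V [] with rfl | hV₀
    · exact Or.inl rfl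
    · exact Or.inr (Or.inl ⟨_, by rw [List.nil_append, RS_of_sorted hV hV₀]; rfl⟩)
  rw [RS_append_of_sorted hU hU₀]
  have hWU : (rowInsertWord U V).2 <+ U := rowInsertWord_snd_sublist U hV
  rcases eq_or_ne (rowInsertWord U V).2 [] with hW | hW
  · exact Or.inr (Or.inl ⟨_, by rw [hW]; rfl⟩)
  · refine Or.inr (Or.inr ⟨_, _, by rw [RS_of_sorted (hU.sublist hWU) hW]; rfl, ?_⟩)
    exact hWU.length_le.trans (length_le_length_rowInsertWord U V)

theorem part_RS_append_append_of_sorted {A M V : List α} (hA : A.Pairwise (· ≤ ·))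
    (hM : M.Pairwise (· ≤ ·)) (hV : V.Pairwise (· ≤ ·)) (hA₀ : A ≠ []) :
    (∃ x, part (RS (A ++ M ++ V)) = [x]) ∨ (∃ x y, part (RS (A ++ M ++ V)) = [x, y]) ∨
    ∃ x y z, part (RS (A ++ M ++ V)) = [x, y, z] ∧ M.length ≤ x ∧ z ≤ y := by
  set R := (rowInsertWord A M).1
  set U := (rowInsertWord A M).2
  have hUA : U <+ A := rowInsertWord_snd_sublist A hM
  have hpart : part (RS (A ++ M ++ V)) =
      (rowInsertWord R V).1.length :: part (RS (U ++ (rowInsertWord R V).2)) := by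
    rw [RS_append, RS_append_of_sorted hA hA₀, foldl_insertT_cons, RS_append]
    rfl
  have hx : M.length ≤ (rowInsertWord R V).1.length := by
    have : R.length + U.length = A.length + M.length := length_rowInsertWord_add A M
    have := length_le_length_rowInsertWord R V
    have := hUA.length_le
    omega
  rcases part_RS_append_of_sorted (hA.sublist hUA)
      ((rowInsertWord_fst_sorted hA M).sublist (rowInsertWord_snd_sublist R hV)) with
    h | ⟨y, h⟩ | ⟨y, z, h, hzy⟩ <;> rw [h] at hpart
  exacts [Or.inl ⟨_, hpart⟩, Or.inr (Or.inl ⟨_, _, hpart⟩), Or.inr (Or.inr ⟨_, _, _, hpart, hx, hzy⟩)]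

theorem sum_part_insertT (T : List (List α)) (x : α) :
    (part (insertT T x)).sum = (part T).sum + 1 := by
  induction T generalizing x with
  | nil => rfl
  | cons r T ih =>
    simp only [part] at ih ⊢
    rcases rowInsert_eq_append_or_bump r x with ⟨h, -⟩ | ⟨ys, y, zs, rfl, h, -, -⟩
    · simp only [insertT, h, List.map_cons, List.sum_cons, List.length_append,
        List.length_singleton]
      omega
    · simp only [insertT, h, List.map_cons, List.sum_cons, ih, List.length_append,
        List.length_cons]
      omega

theorem sum_part_RS (w : List α) : (part (RS w)).sum = w.length := by
  induction w using List.reverseRecOn with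
  | nil => rfl
  | append_singleton l x ih =>
    rw [RS_append, List.foldl_cons, List.foldl_nil, sum_part_insertT, ih, List.length_append,
      List.length_singleton]

end RowInsertion

theorem contentP_singleton (x : ℕ) : contentP [x] = ↑[x / 2] := by
  simp [contentP, List.range_succ]

theorem contentP_pair (x y : ℕ) : contentP [x, y] = ↑[0, (y + 1) / 2, (x + 2) / 2] := by
  simp [contentP, List.range_succ]

theorem contentP_triple (x y z : ℕ) :
    contentP [x, y, z] = ↑[z / 2, (y + 1) / 2, (x + 2) / 2] := by
  simp [contentP, List.range_succ]

theorem eq_of_contentP_eq_of_le {p q x y z : ℕ} (hpq : p < q) (hx : 2 * q + 1 ≤ x)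
    (hzy : z ≤ y) (hsum : x + y + z = 4 * p + 2 * q + 3)
    (h : contentP [x, y, z] = contentP [2 * q + 1, 2 * p + 1, 2 * p + 1]) :
    [x, y, z] = [2 * q + 1, 2 * p + 1, 2 * p + 1] ∨ [x, y, z] = [2 * q + 1, 2 * p + 2, 2 * p] := by
  rw [contentP_triple, contentP_triple] at h
  -- membership and the sum already pin the multiset down under these inequalities
  have hmem : ∀ v ∈ (↑[z / 2, (y + 1) / 2, (x + 2) / 2] : Multiset ℕ),
      v ∈ (↑[(2 * p + 1) / 2, (2 * p + 1 + 1) / 2, (2 * q + 1 + 2) / 2] : Multiset ℕ) :=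
    fun v hv => h ▸ hv
  have hs := congrArg Multiset.sum h
  simp only [Multiset.mem_coe, List.mem_cons, List.not_mem_nil, or_false, forall_eq_or_imp,
    forall_eq, Multiset.sum_coe, List.sum_cons, List.sum_nil] at hmem hs
  simp only [List.cons.injEq, and_true]
  omega

theorem negRow_sorted {β : Type*} [AddCommGroup β] [LinearOrder β] [IsOrderedAddMonoid β]
    {l : List β} (h : l.Pairwise (· ≤ ·)) : (negRow l).Pairwise (· ≤ ·) := by
  rw [negRow, List.pairwise_map, List.pairwise_reverse]
  exact h.imp neg_le_neg

theorem sorted_append_zero_negRow {β : Type*} [AddCommGroup β] [LinearOrder β]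
    [IsOrderedAddMonoid β] {l : List β} (h : l.Pairwise (· ≤ ·)) (hl : ∀ z ∈ l, z ≤ 0) :
    (l ++ [0] ++ negRow l).Pairwise (· ≤ ·) := by
  have hneg : ∀ z ∈ negRow l, 0 ≤ z := by
    intro z hz
    obtain ⟨w, hw, rfl⟩ := List.mem_map.mp hz
    exact neg_nonneg.mpr (hl w (List.mem_reverse.mp hw))
  simp only [List.pairwise_append, List.pairwise_singleton, List.mem_append,
    List.mem_singleton]
  refine ⟨⟨h, trivial, fun a ha b hb => hb ▸ hl a ha⟩, negRow_sorted h, ?_⟩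
  rintro a (ha | rfl) b hb
  exacts [(hl a ha).trans (hneg b hb), hneg b hb]

/-- Let `p < q` be positive integers and let `P` be the symmetric pyramid with
three rows of lengths `2p+1, 2q+1, 2p+1`.  An element `A ∈ sTab^≤(P)` is given
by its top row `a_1 ≤ … ≤ a_{2p+1}` and the first half `b_1 ≤ … ≤ b_q ≤ 0` of
its middle row; `word(A)` reads the three rows in order.  If
`content(part(RS(A))) = content((2p+1, 2p+1, 2q+1))` then
`part(RS(A)) = (2q+1, 2p+1, 2p+1)` or `part(RS(A)) = (2q+1, 2p+2, 2p)`. -/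
theorem stmt8 (p q : ℕ) (hp : 0 < p) (hpq : p < q)
    (a : Fin (2 * p + 1) → ℤ) (b : Fin q → ℤ)
    (ha : Monotone a) (hb : Monotone b) (hb0 : b ⟨q - 1, by omega⟩ ≤ 0)
    (hcont : contentP (part (RS (List.ofFn a ++
        (List.ofFn b ++ [0] ++ negRow (List.ofFn b)) ++ negRow (List.ofFn a)))) =
      contentP [2 * q + 1, 2 * p + 1, 2 * p + 1]) :
    part (RS (List.ofFn a ++ (List.ofFn b ++ [0] ++ negRow (List.ofFn b)) ++
        negRow (List.ofFn a))) = [2 * q + 1, 2 * p + 1, 2 * p + 1] ∨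
    part (RS (List.ofFn a ++ (List.ofFn b ++ [0] ++ negRow (List.ofFn b)) ++
        negRow (List.ofFn a))) = [2 * q + 1, 2 * p + 2, 2 * p] := by
  have hA : (List.ofFn a).Pairwise (· ≤ ·) := List.pairwise_ofFn.mpr fun _ _ h => ha h.le
  have hB : (List.ofFn b).Pairwise (· ≤ ·) := List.pairwise_ofFn.mpr fun _ _ h => hb h.le
  have hB0 : ∀ z ∈ List.ofFn b, z ≤ 0 := by
    intro z hz
    obtain ⟨i, rfl⟩ := List.mem_ofFn.mp hz
    exact (hb (Fin.le_def.mpr (Nat.le_sub_one_of_lt i.isLt))).trans hb0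
  rcases part_RS_append_append_of_sorted hA (sorted_append_zero_negRow hB hB0) (negRow_sorted hA)
    (by simp) with ⟨x, h⟩ | ⟨x, y, h⟩ | ⟨x, y, z, h, hx, hzy⟩
  · rw [h, contentP_singleton, contentP_triple] at hcont
    simpa using congrArg Multiset.card hcont
  · have h0 : 0 ∈ contentP [2 * q + 1, 2 * p + 1, 2 * p + 1] := by
      rw [← hcont, h, contentP_pair]
      simp
    simp [contentP_triple] at h0
    omega
  · have hsum := sum_part_RS (List.ofFn a ++ (List.ofFn b ++ [0] ++ negRow (List.ofFn b)) ++
      negRow (List.ofFn a))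
    rw [h] at hcont hsum ⊢
    simp only [List.length_ofFn, List.length_append, negRow, List.length_map,
      List.length_reverse, List.length_cons, List.length_nil, List.sum_cons,
      List.sum_nil] at hx hsum
    exact eq_of_contentP_eq_of_le hpq (by omega) hzy (by omega) hcont

end BG
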